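/- arXiv:1304.3295 — 7 statements merged into one kernel-verified Lean document; each statement's English description precedes it below -/
import Mathlib

section
/- Let γ be a nonzero real number. Define functions p_n : ℝ → ℝ (n = 0, 1, 2, …) by p_{2n}(x) = ((−γ)^n/√(n!))·C_n(x²; γ²) and p_{2n+1}(x) = −((−γ)^{n−1}/√(n!))·x·C_n(x²−1; γ²). Then p_{−1} = 0, p_0 = 1, and for all n ≥ 0 and all real x the recurrence relations hold: x·p_{2n}(x) = √n·p_{2n−1}(x) + γ·p_{2n+1}(x) and x·p_{2n+1}(x) = γ·p_{2n}(x) + √(n+1)·p_{2n+2}(x). (Equivalently, with c_{2m} = γ and c_{2m+1} = √(m+1), one has c_{m−1} p_{m−1}(x) + c_m p_{m+1}(x) = x·p_m(x) for all m ≥ 0, where the term with index −1 is omitted.) -/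
/-!
Writing the falling factorial `y(y-1)⋯(y-k+1)` as `descPochhammer`, Pascal's rule and the
identity `(y)_{k+1} - (y-1)_{k+1} = (k+1)(y-1)_k` give the two contiguous relations
`C_{n+1}(y) = C_n(y) - (y/a)·C_n(y-1)` and `C_{n+1}(y) - C_{n+1}(y-1) = -((n+1)/a)·C_n(y-1)`.
With `y = x²` and `a = γ²`, the odd recurrence of the theorem is the first relation and the
even one is the second; the normalisations `(-γ)^n/√(n!)` only contribute the factors `γ` and
`√(n+1)`.
-/

/-- The Charlier polynomial `C_n(x; a) = ₂F₀(-n, -x; —; -1/a)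
  = ∑_{k=0}^{n} (n choose k)·x(x-1)⋯(x-k+1)·(-1/a)^k`,
  regarded as a polynomial function of a real variable `x`. -/
noncomputable def charlier (a : ℝ) (n : ℕ) (x : ℝ) : ℝ :=
  ∑ k ∈ Finset.range (n + 1),
    (n.choose k : ℝ) * (∏ j ∈ Finset.range k, (x - (j : ℝ))) * (-1 / a) ^ k

open Finset Polynomial Real

theorem descPochhammer_succ_eval_left {R : Type*} [CommRing R] (n : ℕ) (r : R) :
    (descPochhammer R (n + 1)).eval r = r * (descPochhammer R n).eval (r - 1) := by
  simp [descPochhammer_succ_left, eval_comp]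

theorem descPochhammer_succ_eval_sub_eval_sub_one {R : Type*} [CommRing R] (n : ℕ) (r : R) :
    (descPochhammer R (n + 1)).eval r - (descPochhammer R (n + 1)).eval (r - 1) =
      (n + 1) * (descPochhammer R n).eval (r - 1) := by
  have h := congr_arg (eval r) (descPochhammer_succ_comp_X_sub_one (R := R) n)
  simp only [eval_comp, eval_sub, eval_X, eval_one, smul_eq_mul, eval_mul, eval_add,
    eval_natCast] at h
  rw [h]
  abel

theorem charlier_eq_sum_descPochhammer (a : ℝ) (n : ℕ) (y : ℝ) :
    charlier a n y =
      ∑ k ∈ range (n + 1),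
        (n.choose k : ℝ) * ((descPochhammer ℝ k).eval y * (-1 / a) ^ k) := by
  simp [charlier, descPochhammer_eval_eq_prod_range, mul_assoc]

theorem charlier_zero (a y : ℝ) : charlier a 0 y = 1 := by
  simp [charlier]

theorem charlier_succ (a : ℝ) (n : ℕ) (y : ℝ) :
    charlier a (n + 1) y = charlier a n y + (-1 / a) * y * charlier a n (y - 1) := by
  simp only [charlier_eq_sum_descPochhammer]
  rw [sum_choose_succ_mul (fun k _ => (descPochhammer ℝ k).eval y * (-1 / a) ^ k), mul_sum]
  congr 1
  refine sum_congr rfl fun k _ => ?_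
  rw [descPochhammer_succ_eval_left, pow_succ]
  ring

theorem charlier_succ_sub_charlier_succ_sub_one (a : ℝ) (n : ℕ) (y : ℝ) :
    charlier a (n + 1) y - charlier a (n + 1) (y - 1) =
      (-1 / a) * (n + 1) * charlier a n (y - 1) := by
  simp only [charlier_eq_sum_descPochhammer]
  rw [← sum_sub_distrib, sum_range_succ', mul_sum]
  simp only [descPochhammer_zero, eval_one, sub_self, add_zero]
  refine sum_congr rfl fun k _ => ?_
  have hchoose : ((n + 1 : ℕ) : ℝ) * n.choose k = (n + 1).choose (k + 1) * (k + 1 : ℕ) := by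
    exact_mod_cast Nat.add_one_mul_choose_eq n k
  push_cast at hchoose
  rw [← mul_sub, ← sub_mul, descPochhammer_succ_eval_sub_eval_sub_one, pow_succ]
  linear_combination (1 / a) * (descPochhammer ℝ k).eval (y - 1) * (-1 / a) ^ k * hchoose

theorem sqrt_factorial_succ (n : ℕ) :
    √((n + 1).factorial : ℝ) = √(n + 1) * √(n.factorial : ℝ) := by
  rw [Nat.factorial_succ, Nat.cast_mul, sqrt_mul (by positivity)]
  push_cast
  rfl

noncomputable def charlierEven (γ : ℝ) (n : ℕ) (x : ℝ) : ℝ :=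
  ((-γ) ^ n / √(n.factorial : ℝ)) * charlier (γ ^ 2) n (x ^ 2)

noncomputable def charlierOdd (γ : ℝ) (n : ℕ) (x : ℝ) : ℝ :=
  -(((-γ) ^ ((n : ℤ) - 1) / √(n.factorial : ℝ)) * x * charlier (γ ^ 2) n (x ^ 2 - 1))

theorem charlierOdd_eq_pow_div {γ : ℝ} (hγ : γ ≠ 0) (n : ℕ) (x : ℝ) :
    charlierOdd γ n x =
      (-γ) ^ n / (γ * √(n.factorial : ℝ)) * x * charlier (γ ^ 2) n (x ^ 2 - 1) := by
  rw [charlierOdd, zpow_sub_one₀ (neg_ne_zero.2 hγ), zpow_natCast]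
  field_simp

theorem mul_charlierEven_zero {γ : ℝ} (hγ : γ ≠ 0) (x : ℝ) :
    x * charlierEven γ 0 x = γ * charlierOdd γ 0 x := by
  rw [charlierOdd_eq_pow_div hγ, charlierEven]
  simp only [charlier_zero, pow_zero, Nat.factorial_zero, Nat.cast_one, sqrt_one]
  field_simp

theorem mul_charlierEven_succ {γ : ℝ} (hγ : γ ≠ 0) (n : ℕ) (x : ℝ) :
    x * charlierEven γ (n + 1) x =
      √(n + 1) * charlierOdd γ n x + γ * charlierOdd γ (n + 1) x := by
  have hdiff := charlier_succ_sub_charlier_succ_sub_one (γ ^ 2) n (x ^ 2)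
  have hsqrt : √((n : ℝ) + 1) ^ 2 = n + 1 := sq_sqrt (by positivity)
  rw [charlierOdd_eq_pow_div hγ, charlierOdd_eq_pow_div hγ, charlierEven, sqrt_factorial_succ]
  field_simp
  field_simp at hdiff
  linear_combination
    -x * (-γ) ^ n * hdiff - x * (-γ) ^ n * charlier (γ ^ 2) n (x ^ 2 - 1) * hsqrt

theorem mul_charlierOdd {γ : ℝ} (hγ : γ ≠ 0) (n : ℕ) (x : ℝ) :
    x * charlierOdd γ n x = γ * charlierEven γ n x + √(n + 1) * charlierEven γ (n + 1) x := by
  have hsucc := charlier_succ (γ ^ 2) n (x ^ 2)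
  rw [charlierOdd_eq_pow_div hγ, charlierEven, charlierEven, sqrt_factorial_succ]
  field_simp
  field_simp at hsucc
  linear_combination (-γ) ^ n * hsucc

/-- For `γ ≠ 0`, the polynomials `p_{2n}(x) = ((-γ)^n/√(n!))·C_n(x²; γ²)` and
`p_{2n+1}(x) = -((-γ)^{n-1}/√(n!))·x·C_n(x²-1; γ²)` satisfy `p_0 = 1` and the
recurrence relations `x·p_{2n}(x) = √n·p_{2n-1}(x) + γ·p_{2n+1}(x)` and
`x·p_{2n+1}(x) = γ·p_{2n}(x) + √(n+1)·p_{2n+2}(x)` (term with index `-1` omitted). -/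
theorem charlier_solve_recurrence (γ : ℝ) (hγ : γ ≠ 0) (p : ℕ → ℝ → ℝ)
    (hpeven : ∀ (n : ℕ) (x : ℝ),
      p (2 * n) x = ((-γ) ^ n / Real.sqrt (n.factorial : ℝ)) * charlier (γ ^ 2) n (x ^ 2))
    (hpodd : ∀ (n : ℕ) (x : ℝ),
      p (2 * n + 1) x =
        -(((-γ) ^ ((n : ℤ) - 1) / Real.sqrt (n.factorial : ℝ)) * x *
          charlier (γ ^ 2) n (x ^ 2 - 1))) :
    (∀ x : ℝ, p 0 x = 1) ∧
    (∀ (n : ℕ) (x : ℝ), x * p (2 * n) x =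
      Real.sqrt (n : ℝ) * (if n = 0 then (0 : ℝ) else p (2 * n - 1) x) + γ * p (2 * n + 1) x) ∧
    (∀ (n : ℕ) (x : ℝ), x * p (2 * n + 1) x =
      γ * p (2 * n) x + Real.sqrt ((n : ℝ) + 1) * p (2 * n + 2) x) := by
  have heven (n : ℕ) (x : ℝ) : p (2 * n) x = charlierEven γ n x := hpeven n x
  have hodd (n : ℕ) (x : ℝ) : p (2 * n + 1) x = charlierOdd γ n x := hpodd n x
  refine ⟨fun x => by simpa [charlier_zero] using hpeven 0 x, ?_, fun n x => ?_⟩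
  · rintro (_ | n) x
    · simpa [← heven 0, hodd 0] using mul_charlierEven_zero hγ x
    · rw [if_neg n.succ_ne_zero, show 2 * (n + 1) - 1 = 2 * n + 1 by omega, heven, hodd, hodd]
      push_cast
      exact mul_charlierEven_succ hγ n x
  · rw [show 2 * n + 2 = 2 * (n + 1) by ring, hodd, heven, heven]
    exact mul_charlierOdd hγ n x
end

section
/- For every real number a > 0 and all integers m, n ≥ 0, the Charlier polynomials satisfy the orthogonality relation Σ_{x=0}^{∞} (a^x/x!)·C_m(x; a)·C_n(x; a) = a^{−n}·e^{a}·n!·δ_{mn}, where the series converges absolutely and δ_{mn} is the Kronecker delta. -/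
open Finset Nat

lemma Real.hasSum_pow_div_factorial (a : ℝ) : HasSum (fun n => a ^ n / n !) (Real.exp a) :=
  Real.exp_eq_exp_ℝ ▸ NormedSpace.expSeries_div_hasSum_exp a

lemma prod_range_natCast_sub (x k : ℕ) :
    ∏ j ∈ range k, ((x : ℝ) - j) = x.descFactorial k := by
  rw [← descPochhammer_eval_eq_prod_range, descPochhammer_eval_eq_descFactorial]

lemma charlier_natCast (a : ℝ) (n x : ℕ) :
    charlier a n x = ∑ k ∈ range (n + 1), (n.choose k : ℝ) * x.descFactorial k * (-1 / a) ^ k := by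
  simp only [charlier, prod_range_natCast_sub]

lemma succ_descFactorial_succ_eq_add (x k : ℕ) :
    (x + 1).descFactorial (k + 1) = x.descFactorial (k + 1) + (k + 1) * x.descFactorial k := by
  rw [succ_descFactorial_succ, descFactorial_succ]
  rcases lt_or_ge x k with h | h
  · simp [descFactorial_of_lt h]
  · rw [← Nat.add_mul]
    congr 1
    omega

lemma charlier_natCast_succ_add_one (a : ℝ) (n x : ℕ) :
    charlier a (n + 1) ((x + 1 : ℕ) : ℝ) =
      charlier a (n + 1) x - (n + 1) / a * charlier a n x := by
  simp only [charlier_natCast]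
  rw [sum_range_succ', sum_range_succ' _ (n + 1), mul_sum, add_sub_right_comm,
    ← sum_sub_distrib]
  congr 1
  refine sum_congr rfl fun k _ => ?_
  have hchoose : ((n + 1 : ℕ) : ℝ) * n.choose k = (n + 1).choose (k + 1) * (k + 1 : ℕ) := by
    exact_mod_cast add_one_mul_choose_eq n k
  rw [succ_descFactorial_succ_eq_add, pow_succ]
  push_cast at hchoose ⊢
  linear_combination (x.descFactorial k * (-1 / a) ^ k / a) * hchoose

lemma Nat.descFactorial_le_factorial_mul_two_pow (x k : ℕ) : x.descFactorial k ≤ k ! * 2 ^ x := by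
  rw [descFactorial_eq_factorial_mul_choose]
  exact Nat.mul_le_mul_left _ (choose_le_two_pow x k)

lemma exists_abs_charlier_natCast_le (a : ℝ) (n : ℕ) :
    ∃ K, ∀ x : ℕ, |charlier a n x| ≤ K * 2 ^ x := by
  refine ⟨∑ k ∈ range (n + 1), n.choose k * k ! * |(-1 / a) ^ k|, fun x => ?_⟩
  rw [charlier_natCast, sum_mul]
  refine (abs_sum_le_sum_abs _ _).trans (sum_le_sum fun k _ => ?_)
  have hx : (x.descFactorial k : ℝ) ≤ k ! * 2 ^ x := by
    exact_mod_cast Nat.descFactorial_le_factorial_mul_two_pow x k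
  rw [abs_mul, abs_mul, Nat.abs_cast, Nat.abs_cast]
  calc (n.choose k : ℝ) * x.descFactorial k * |(-1 / a) ^ k|
      ≤ n.choose k * (k ! * 2 ^ x) * |(-1 / a) ^ k| := by gcongr
    _ = n.choose k * k ! * |(-1 / a) ^ k| * 2 ^ x := by ring

lemma summable_abs_pow_div_factorial_mul_charlier_mul_charlier (a : ℝ) (m n : ℕ) :
    Summable fun x : ℕ => |a ^ x / x ! * charlier a m x * charlier a n x| := by
  obtain ⟨K, hK⟩ := exists_abs_charlier_natCast_le a m
  obtain ⟨L, hL⟩ := exists_abs_charlier_natCast_le a n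
  refine .of_nonneg_of_le (fun _ => abs_nonneg _) (fun x => ?_)
    ((Real.summable_pow_div_factorial (4 * |a|)).mul_left (K * L))
  have hK0 : 0 ≤ K * 2 ^ x := (abs_nonneg _).trans (hK x)
  calc |a ^ x / x ! * charlier a m x * charlier a n x|
      = |a| ^ x / x ! * |charlier a m x| * |charlier a n x| := by
        rw [abs_mul, abs_mul, abs_div, abs_pow, Nat.abs_cast]
    _ ≤ |a| ^ x / x ! * (K * 2 ^ x) * (L * 2 ^ x) := by
        gcongr
        exacts [hK x, hL x]
    _ = K * L * ((4 * |a|) ^ x / x !) := by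
        rw [mul_pow, show (4 : ℝ) ^ x = 2 ^ x * 2 ^ x by rw [← mul_pow]; norm_num]
        ring

lemma hasSum_pow_div_factorial_mul_descFactorial_mul {a s : ℝ} {f : ℕ → ℝ} (j : ℕ)
    (h : HasSum (fun y => a ^ y / y ! * f (y + j)) s) :
    HasSum (fun x => a ^ x / x ! * x.descFactorial j * f x) (a ^ j * s) := by
  have hshift (y : ℕ) : a ^ (y + j) / (y + j)! * (y + j).descFactorial j * f (y + j) =
      a ^ j * (a ^ y / y ! * f (y + j)) := by
    have hfac : (y ! : ℝ) * (y + j).descFactorial j = (y + j)! := by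
      exact_mod_cast Nat.add_sub_cancel y j ▸ factorial_mul_descFactorial (Nat.le_add_left j y)
    rw [← hfac, pow_add]
    field_simp
  have := (hasSum_nat_add_iff (f := fun x => a ^ x / x ! * x.descFactorial j * f x) j).mp
    (by simpa only [hshift] using h.mul_left (a ^ j))
  rwa [sum_eq_zero fun i hi => by simp [descFactorial_of_lt (mem_range.1 hi)], add_zero] at this

lemma hasSum_mul_charlier_mul (a : ℝ) {w g S : ℕ → ℝ} (n : ℕ)
    (h : ∀ k, HasSum (fun x => w x * x.descFactorial k * g x) (S k)) :
    HasSum (fun x => w x * charlier a n x * g x)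
      (∑ k ∈ range (n + 1), n.choose k * (-1 / a) ^ k * S k) := by
  have hexpand : (fun x => w x * charlier a n x * g x) = fun x =>
      ∑ k ∈ range (n + 1), n.choose k * (-1 / a) ^ k * (w x * x.descFactorial k * g x) := by
    funext x
    rw [charlier_natCast, mul_sum, sum_mul]
    exact sum_congr rfl fun k _ => by ring
  rw [hexpand]
  exact hasSum_sum fun k _ => (h k).mul_left _

lemma hasSum_pow_div_factorial_mul_charlier {a : ℝ} (ha : a ≠ 0) (n : ℕ) :
    HasSum (fun x => a ^ x / x ! * charlier a n x) (Real.exp a * 0 ^ n) := by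
  have hmoments (k : ℕ) :
      HasSum (fun x => a ^ x / x ! * x.descFactorial k * 1) (a ^ k * Real.exp a) := by
    simpa using hasSum_pow_div_factorial_mul_descFactorial_mul (f := fun _ => 1) k
      (by simpa using Real.hasSum_pow_div_factorial a)
  have h := hasSum_mul_charlier_mul a n hmoments
  simp only [mul_one] at h
  convert h using 1
  rw [← neg_add_cancel (1 : ℝ), add_pow, mul_sum]
  refine sum_congr rfl fun k _ => ?_
  rw [one_pow, mul_one, div_pow]
  field_simp

lemma hasSum_pow_div_factorial_mul_charlier_natCast_add {a : ℝ} (ha : a ≠ 0) (j n : ℕ) :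
    HasSum (fun y => a ^ y / y ! * charlier a n ((y + j : ℕ) : ℝ))
      (Real.exp a * (-1 / a) ^ n * j.descFactorial n) := by
  induction j generalizing n with
  | zero =>
    convert hasSum_pow_div_factorial_mul_charlier ha n using 1
    · simp
    · cases n <;> simp
  | succ j ih =>
    cases n with
    | zero => simpa [charlier] using Real.hasSum_pow_div_factorial a
    | succ n =>
      have hstep (y : ℕ) : a ^ y / y ! * charlier a (n + 1) ((y + (j + 1) : ℕ) : ℝ) =
          a ^ y / y ! * charlier a (n + 1) ((y + j : ℕ) : ℝ) -
            (n + 1) / a * (a ^ y / y ! * charlier a n ((y + j : ℕ) : ℝ)) := by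
        rw [← Nat.add_assoc, charlier_natCast_succ_add_one]
        ring
      have hvalue : Real.exp a * (-1 / a) ^ (n + 1) * (j + 1).descFactorial (n + 1) =
          Real.exp a * (-1 / a) ^ (n + 1) * j.descFactorial (n + 1) -
            (n + 1) / a * (Real.exp a * (-1 / a) ^ n * j.descFactorial n) := by
        rw [succ_descFactorial_succ_eq_add, pow_succ]
        push_cast
        ring
      rw [funext hstep, hvalue]
      exact (ih (n + 1)).sub ((ih n).mul_left _)

lemma hasSum_charlier_mul_charlier_of_le {a : ℝ} (ha : a ≠ 0) {m n : ℕ} (hmn : m ≤ n) :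
    HasSum (fun x => a ^ x / x ! * charlier a m x * charlier a n x)
      (a ^ (-(n : ℤ)) * Real.exp a * n ! * if m = n then 1 else 0) := by
  have h := hasSum_mul_charlier_mul a (w := fun x => a ^ x / x !) (g := (charlier a n ·)) m
    fun j => hasSum_pow_div_factorial_mul_descFactorial_mul j
      (hasSum_pow_div_factorial_mul_charlier_natCast_add ha j n)
  convert h using 1
  -- `j^{(n)} = 0` for `j < n`, so only the top term `j = m` can survive.
  rw [sum_range_succ, sum_eq_zero fun j hj => by
    simp [descFactorial_of_lt ((mem_range.1 hj).trans_le hmn)], zero_add]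
  split_ifs with h
  · subst h
    rw [descFactorial_self, choose_self, zpow_neg, zpow_natCast]
    have hsign : (-1 / a) ^ m * a ^ m * (-1 / a) ^ m = (a ^ m)⁻¹ := by
      rw [← mul_pow, div_mul_cancel₀ _ ha, ← mul_pow, ← inv_pow, neg_one_mul, neg_div, neg_neg,
        one_div]
    rw [← hsign]
    push_cast
    ring
  · simp [descFactorial_of_lt (lt_of_le_of_ne hmn h)]

/-- Orthogonality of Charlier polynomials: for `a > 0`,
`∑_{x=0}^{∞} (a^x/x!)·C_m(x; a)·C_n(x; a) = a^{-n}·e^a·n!·δ_{mn}`,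
the series converging absolutely. -/
theorem charlier_orthogonality (a : ℝ) (ha : 0 < a) (m n : ℕ) :
    Summable (fun x : ℕ =>
      |a ^ x / (x.factorial : ℝ) * charlier a m (x : ℝ) * charlier a n (x : ℝ)|) ∧
    ∑' x : ℕ, a ^ x / (x.factorial : ℝ) * charlier a m (x : ℝ) * charlier a n (x : ℝ) =
      a ^ (-(n : ℤ)) * Real.exp a * (n.factorial : ℝ) * (if m = n then 1 else 0) := by
  refine ⟨summable_abs_pow_div_factorial_mul_charlier_mul_charlier a m n, HasSum.tsum_eq ?_⟩
  rcases le_or_gt m n with hmn | hnm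
  · exact hasSum_charlier_mul_charlier_of_le ha.ne' hmn
  · have hswap := hasSum_charlier_mul_charlier_of_le ha.ne' hnm.le
    rw [if_neg hnm.ne, mul_zero] at hswap
    rw [if_neg hnm.ne', mul_zero]
    simpa only [mul_right_comm _ (charlier a n _)] using hswap
end

section
/- Let γ be a real number and c : ℕ → ℝ be given by c_{2m} = γ, c_{2m+1} = √(m+1). Define operators on complex sequences f : ℕ → ℂ by (q̂f)(n) = c_{n−1}·f(n−1) + c_n·f(n+1), (p̂f)(n) = i·c_{n−1}·f(n−1) − i·c_n·f(n+1), and (Ĥf)(n) = (n + 1/2)·f(n), where terms with index −1 are omitted. Then the Hamilton–Lie equations hold as operator identities: for every f : ℕ → ℂ and every n ≥ 0, (Ĥ(q̂f))(n) − (q̂(Ĥf))(n) = −i·(p̂f)(n) and (Ĥ(p̂f))(n) − (p̂(Ĥf))(n) = i·(q̂f)(n). -/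
/-- The position operator `(q̂f)(n) = c_{n-1}·f(n-1) + c_n·f(n+1)` (term with index `-1`
omitted) of the sh(2|2) oscillator model, acting on complex sequences. -/
noncomputable def qop (c : ℕ → ℝ) (f : ℕ → ℂ) (n : ℕ) : ℂ :=
  (if n = 0 then 0 else (c (n - 1) : ℂ) * f (n - 1)) + (c n : ℂ) * f (n + 1)

/-- The momentum operator `(p̂f)(n) = i·c_{n-1}·f(n-1) - i·c_n·f(n+1)` (term with index `-1`
omitted) of the sh(2|2) oscillator model, acting on complex sequences. -/
noncomputable def pop (c : ℕ → ℝ) (f : ℕ → ℂ) (n : ℕ) : ℂ :=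
  (if n = 0 then 0 else Complex.I * (c (n - 1) : ℂ) * f (n - 1)) -
    Complex.I * (c n : ℂ) * f (n + 1)

/-- The Hamiltonian `(Ĥf)(n) = (n + 1/2)·f(n)` of the sh(2|2) oscillator model. -/
noncomputable def Hop (f : ℕ → ℂ) (n : ℕ) : ℂ := ((n : ℂ) + 1 / 2) * f n

/-- The Hamilton–Lie equations `[Ĥ, q̂] = -i·p̂` and `[Ĥ, p̂] = i·q̂` hold as operator
identities for the sh(2|2) oscillator model with `c_{2m} = γ`, `c_{2m+1} = √(m+1)`. -/
theorem hamilton_lie_equations (γ : ℝ) (c : ℕ → ℝ)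
    (hc0 : ∀ m : ℕ, c (2 * m) = γ)
    (hc1 : ∀ m : ℕ, c (2 * m + 1) = Real.sqrt ((m : ℝ) + 1)) :
    ∀ (f : ℕ → ℂ) (n : ℕ),
      Hop (qop c f) n - qop c (Hop f) n = -Complex.I * pop c f n ∧
      Hop (pop c f) n - pop c (Hop f) n = Complex.I * qop c f n := by
  intro f n
  cases n with
  | zero =>
    constructor <;> simp [Hop, qop, pop, Complex.I_sq] <;> ring_nf <;> simp [Complex.I_sq] <;> ring
  | succ k =>
    constructor <;>
      simp only [Hop, qop, pop, Nat.succ_ne_zero, if_false, Nat.add_sub_cancel] <;>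
      push_cast <;> ring_nf <;> simp [Complex.I_sq] <;> ring
end

section
/- Let γ be a real number and c : ℕ → ℝ be given by c_{2m} = γ, c_{2m+1} = √(m+1). Define operators on complex sequences f : ℕ → ℂ by (q̂f)(n) = c_{n−1}·f(n−1) + c_n·f(n+1) and (p̂f)(n) = i·c_{n−1}·f(n−1) − i·c_n·f(n+1), terms with index −1 omitted. Then the commutator [q̂, p̂] is diagonal: for every f : ℕ → ℂ and every n ≥ 0, (q̂(p̂f))(n) − (p̂(q̂f))(n) = 2i·( (−1)^n·(γ² − n/2) + (1 − (−1)^n)/4 )·f(n). In particular, ([q̂,p̂]f)(2k) = 2i(γ² − k)·f(2k) and ([q̂,p̂]f)(2k−1) = −2i(γ² − k)·f(2k−1). -/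
lemma comm_eq (c : ℕ → ℝ) (f : ℕ → ℂ) :
    ∀ n, qop c (pop c f) n - pop c (qop c f) n =
      2 * Complex.I * ((c n : ℂ)^2 - (if n = 0 then 0 else (c (n-1) : ℂ)^2)) * f n
  | 0 => by simp [qop, pop]; ring
  | 1 => by simp [qop, pop]; ring
  | (n+2) => by simp [qop, pop]; ring

/-- The commutator `[q̂, p̂]` is diagonal:
`([q̂,p̂]f)(n) = 2i·((-1)^n·(γ² - n/2) + (1-(-1)^n)/4)·f(n)`; in particular
`([q̂,p̂]f)(2k) = 2i(γ²-k)·f(2k)` and `([q̂,p̂]f)(2k-1) = -2i(γ²-k)·f(2k-1)`. -/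
theorem position_momentum_commutator (γ : ℝ) (c : ℕ → ℝ)
    (hc0 : ∀ m : ℕ, c (2 * m) = γ)
    (hc1 : ∀ m : ℕ, c (2 * m + 1) = Real.sqrt ((m : ℝ) + 1)) :
    (∀ (f : ℕ → ℂ) (n : ℕ),
      qop c (pop c f) n - pop c (qop c f) n =
        2 * Complex.I * ((-1 : ℂ) ^ n * ((γ : ℂ) ^ 2 - (n : ℂ) / 2) +
          (1 - (-1 : ℂ) ^ n) / 4) * f n) ∧
    (∀ (f : ℕ → ℂ) (k : ℕ),
      qop c (pop c f) (2 * k) - pop c (qop c f) (2 * k) =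
        2 * Complex.I * ((γ : ℂ) ^ 2 - (k : ℂ)) * f (2 * k)) ∧
    (∀ (f : ℕ → ℂ) (k : ℕ), 1 ≤ k →
      qop c (pop c f) (2 * k - 1) - pop c (qop c f) (2 * k - 1) =
        -(2 * Complex.I * ((γ : ℂ) ^ 2 - (k : ℂ))) * f (2 * k - 1)) := by
  have sq : ∀ m : ℕ, ((c (2 * m + 1) : ℂ))^2 = (m : ℂ) + 1 := by
    intro m
    rw [hc1 m]
    rw [← Complex.ofReal_pow, Real.sq_sqrt (by positivity)]
    push_cast; ring
  have key : ∀ n : ℕ,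
      2 * Complex.I * ((c n : ℂ)^2 - (if n = 0 then 0 else (c (n-1) : ℂ)^2)) =
      2 * Complex.I * ((-1 : ℂ) ^ n * ((γ : ℂ) ^ 2 - (n : ℂ) / 2) +
          (1 - (-1 : ℂ) ^ n) / 4) := by
    intro n
    rcases Nat.even_or_odd n with ⟨m, hm⟩ | ⟨m, hm⟩
    · have hn : n = 2 * m := by omega
      subst hn
      have h1 : ((-1 : ℂ)) ^ (2 * m) = 1 := by
        rw [pow_mul]; norm_num
      rcases Nat.eq_zero_or_pos m with h | h
      · subst h
        have h0 : c 0 = γ := by simpa using hc0 0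
        simp [h0, h1]
      · obtain ⟨m', rfl⟩ := Nat.exists_eq_add_of_le h
        have h2 : 2 * (1 + m') - 1 = 2 * m' + 1 := by omega
        rw [if_neg (by omega), h2, hc0, h1, sq]
        push_cast; ring
    · subst hm
      have h1 : ((-1 : ℂ)) ^ (2 * m + 1) = -1 := by
        rw [pow_succ, pow_mul]; norm_num
      rw [if_neg (by omega)]
      have h2 : 2 * m + 1 - 1 = 2 * m := rfl
      rw [h2, hc0, h1, sq]
      push_cast; ring
  have main : ∀ (f : ℕ → ℂ) (n : ℕ),
      qop c (pop c f) n - pop c (qop c f) n =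
        2 * Complex.I * ((-1 : ℂ) ^ n * ((γ : ℂ) ^ 2 - (n : ℂ) / 2) +
          (1 - (-1 : ℂ) ^ n) / 4) * f n := by
    intro f n
    rw [comm_eq, key]
  refine ⟨main, ?_, ?_⟩
  · intro f k
    rw [main]
    have h1 : ((-1 : ℂ)) ^ (2 * k) = 1 := by rw [pow_mul]; norm_num
    rw [h1]
    push_cast; ring_nf
  · intro f k hk
    obtain ⟨k', rfl⟩ := Nat.exists_eq_add_of_le hk
    have h2 : 2 * (1 + k') - 1 = 2 * k' + 1 := by omega
    rw [h2, main]
    have h1 : ((-1 : ℂ)) ^ (2 * k' + 1) = -1 := by rw [pow_succ, pow_mul]; norm_num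
    rw [h1]
    push_cast; ring_nf
end

section
/- Let γ be a real number and c : ℕ → ℝ be given by c_{2m} = γ, c_{2m+1} = √(m+1). Define the operator on complex sequences f : ℕ → ℂ by (q̂f)(n) = c_{n−1}·f(n−1) + c_n·f(n+1), terms with index −1 omitted, and let e_n denote the standard basis sequence (e_n(m) = δ_{nm}). Then for every n ≥ 0: (q̂ e_n)(n) = 0 and (q̂(q̂ e_n))(n) = γ² + n/2 + (1 − (−1)^n)/4. Consequently the standard deviation of q̂ in the stationary state n equals (Δq̂)_n = √(γ² + n/2 + (1 − (−1)^n)/4), and in particular (Δq̂)_{2k−1}² = (Δq̂)_{2k}² = γ² + k. -/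
/-- The standard basis sequence `e_n`, with `e_n(m) = δ_{nm}`. -/
def ebasis (n : ℕ) : ℕ → ℂ := fun m => if m = n then 1 else 0

/-- The standard deviation of `q̂` in the stationary state `e_n`:
`(Δq̂)_n = √(⟨n|q̂²|n⟩ - ⟨n|q̂|n⟩²)`, where `⟨n|A|n⟩ = (A e_n)(n)`. -/
noncomputable def sdev (c : ℕ → ℝ) (n : ℕ) : ℝ :=
  Real.sqrt ((qop c (qop c (ebasis n)) n - (qop c (ebasis n) n) ^ 2).re)

/-- For the sh(2|2) oscillator: `(q̂e_n)(n) = 0`, `(q̂²e_n)(n) = γ² + n/2 + (1-(-1)^n)/4`,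
hence `(Δq̂)_n = √(γ² + n/2 + (1-(-1)^n)/4)`, and in particular
`(Δq̂)_{2k-1}² = (Δq̂)_{2k}² = γ² + k`. -/
theorem position_standard_deviation (γ : ℝ) (c : ℕ → ℝ)
    (hc0 : ∀ m : ℕ, c (2 * m) = γ)
    (hc1 : ∀ m : ℕ, c (2 * m + 1) = Real.sqrt ((m : ℝ) + 1)) :
    (∀ n : ℕ, qop c (ebasis n) n = 0) ∧
    (∀ n : ℕ, qop c (qop c (ebasis n)) n =
      ((γ ^ 2 + (n : ℝ) / 2 + (1 - (-1 : ℝ) ^ n) / 4 : ℝ) : ℂ)) ∧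
    (∀ n : ℕ, sdev c n = Real.sqrt (γ ^ 2 + (n : ℝ) / 2 + (1 - (-1 : ℝ) ^ n) / 4)) ∧
    (∀ k : ℕ, 1 ≤ k → sdev c (2 * k - 1) ^ 2 = γ ^ 2 + (k : ℝ) ∧
      sdev c (2 * k) ^ 2 = γ ^ 2 + (k : ℝ)) := by
  have h1 : ∀ n : ℕ, qop c (ebasis n) n = 0 := by
    intro n
    rcases n with _ | n
    · simp [qop, ebasis]
    · simp [qop, ebasis]
  have hval : ∀ n : ℕ, (γ ^ 2 + (n : ℝ) / 2 + (1 - (-1 : ℝ) ^ n) / 4) =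
      (if n = 0 then 0 else (c (n - 1)) ^ 2) + (c n) ^ 2 := by
    intro n
    rcases Nat.even_or_odd n with ⟨m, hm⟩ | ⟨m, hm⟩
    · subst hm
      rcases m with _ | m
      · simp [hc0 0]
      · have : m + 1 + (m + 1) = 2 * (m + 1) := by ring
        rw [this, hc0]
        have h2 : 2 * (m + 1) - 1 = 2 * m + 1 := by omega
        rw [if_neg (by omega), h2, hc1,
          Real.sq_sqrt (by positivity)]
        push_cast
        rw [Even.neg_one_pow ⟨m + 1, by ring⟩]
        ring
    · subst hm
      rw [if_neg (by omega)]
      have h2 : 2 * m + 1 - 1 = 2 * m := by omega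
      rw [h2, hc0, hc1, Real.sq_sqrt (by positivity)]
      push_cast
      rw [Odd.neg_one_pow ⟨m, rfl⟩]
      ring
  have h2 : ∀ n : ℕ, qop c (qop c (ebasis n)) n =
      ((γ ^ 2 + (n : ℝ) / 2 + (1 - (-1 : ℝ) ^ n) / 4 : ℝ) : ℂ) := by
    intro n
    rw [hval n]
    rcases n with _ | n
    · simp [qop, ebasis]; ring
    · have e1 : qop c (ebasis (n + 1)) n = (c n : ℂ) := by
        rcases n with _ | n
        · simp [qop, ebasis]
        · simp [qop, ebasis]
          intro h; omega
      have e2 : qop c (ebasis (n + 1)) (n + 2) = (c (n + 1) : ℂ) := by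
        simp [qop, ebasis]
      show (if n + 1 = 0 then 0 else (c (n + 1 - 1) : ℂ) * qop c (ebasis (n+1)) (n + 1 - 1))
          + (c (n+1) : ℂ) * qop c (ebasis (n+1)) (n + 2) = _
      rw [if_neg (by omega)]
      simp only [Nat.add_sub_cancel]
      rw [e1, e2, if_neg (by omega)]
      push_cast
      ring
  have h3 : ∀ n : ℕ, sdev c n = Real.sqrt (γ ^ 2 + (n : ℝ) / 2 + (1 - (-1 : ℝ) ^ n) / 4) := by
    intro n
    unfold sdev
    rw [h1 n, h2 n]
    rw [show ((0:ℂ)^2 = 0) by norm_num, sub_zero, Complex.ofReal_re]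
  refine ⟨h1, h2, h3, fun k hk => ?_⟩
  have hodd : Odd (2 * k - 1) := by
    refine ⟨k - 1, by omega⟩
  constructor
  · rw [h3, Real.sq_sqrt]
    · rw [Odd.neg_one_pow hodd]
      have : ((2 * k - 1 : ℕ) : ℝ) = 2 * k - 1 := by
        push_cast [Nat.cast_sub (by omega : 1 ≤ 2 * k)]; ring
      rw [this]; ring
    · rw [Odd.neg_one_pow hodd]
      have : ((2 * k - 1 : ℕ) : ℝ) = 2 * k - 1 := by
        push_cast [Nat.cast_sub (by omega : 1 ≤ 2 * k)]; ring
      rw [this]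
      nlinarith [sq_nonneg γ, (by exact_mod_cast hk : (1:ℝ) ≤ k)]
  · rw [h3, Real.sq_sqrt]
    · rw [Even.neg_one_pow ⟨k, by ring⟩]; push_cast; ring
    · rw [Even.neg_one_pow ⟨k, by ring⟩]; push_cast
      nlinarith [sq_nonneg γ, (by exact_mod_cast hk : (1:ℝ) ≤ k)]
end

section
/- Let γ be a real number and c : ℕ → ℝ be given by c_{2m} = γ, c_{2m+1} = √(m+1). Define operators on complex sequences f : ℕ → ℂ by (q̂f)(n) = c_{n−1}·f(n−1) + c_n·f(n+1) and (p̂f)(n) = i·c_{n−1}·f(n−1) − i·c_n·f(n+1), terms with index −1 omitted. Then (1/2)·p̂² + (1/2)·q̂² is diagonal: for every f : ℕ → ℂ and every n ≥ 0, (1/2)·(p̂(p̂f))(n) + (1/2)·(q̂(q̂f))(n) = ( γ² + n/2 + (1 − (−1)^n)/4 )·f(n). -/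
lemma energy_reduce (c : ℕ → ℝ) (f : ℕ → ℂ) (n : ℕ) :
    (1 / 2 : ℂ) * pop c (pop c f) n + (1 / 2 : ℂ) * qop c (qop c f) n =
      ((if n = 0 then 0 else ((c (n-1) : ℂ))^2) + ((c n : ℂ))^2) * f n := by
  match n with
  | 0 =>
    simp only [pop, qop, if_pos rfl, if_neg (Nat.one_ne_zero)]
    simp [Complex.I_sq]
    ring_nf
    simp [Complex.I_sq]
    ring
  | 1 =>
    simp only [pop, qop]
    norm_num
    ring_nf
    simp [Complex.I_sq]
    ring
  | (k+2) =>
    simp only [pop, qop]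
    norm_num
    ring_nf
    simp [Complex.I_sq]
    ring

lemma energy_key (γ : ℝ) (c : ℕ → ℝ)
    (hc0 : ∀ m : ℕ, c (2 * m) = γ)
    (hc1 : ∀ m : ℕ, c (2 * m + 1) = Real.sqrt ((m : ℝ) + 1)) (n : ℕ) :
    ((if n = 0 then 0 else ((c (n-1) : ℂ))^2) + ((c n : ℂ))^2) =
      (γ : ℂ) ^ 2 + (n : ℂ) / 2 + (1 - (-1 : ℂ) ^ n) / 4 := by
  have hsq : ∀ m : ℕ, ((c (2*m+1) : ℂ))^2 = (m : ℂ) + 1 := by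
    intro m
    rw [hc1 m]
    rw [← Complex.ofReal_pow, Real.sq_sqrt (by positivity)]
    push_cast; ring
  rcases Nat.even_or_odd n with ⟨m, rfl⟩ | ⟨m, rfl⟩
  · rcases m with _ | k
    · simp [hc0 0]
    · have h1 : k + 1 + (k + 1) = 2 * (k+1) := by ring
      have h2 : k + 1 + (k + 1) - 1 = 2 * k + 1 := by omega
      rw [if_neg (by omega), h2, h1, hc0 (k+1), hsq k]
      push_cast
      rw [pow_mul, neg_one_sq, one_pow]
      ring
  · have h2 : 2 * m + 1 - 1 = 2 * m := by omega
    rw [if_neg (by omega), h2, hc0 m, hsq m]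
    rw [show ((-1:ℂ))^(2*m+1) = -1 by rw [pow_succ, pow_mul, neg_one_sq, one_pow, one_mul]]
    push_cast
    ring

/-- The operator `p̂²/2 + q̂²/2` of the sh(2|2) oscillator model is diagonal:
`(p̂²/2 + q̂²/2)f(n) = (γ² + n/2 + (1-(-1)^n)/4)·f(n)`. -/
theorem energy_operator_diagonal (γ : ℝ) (c : ℕ → ℝ)
    (hc0 : ∀ m : ℕ, c (2 * m) = γ)
    (hc1 : ∀ m : ℕ, c (2 * m + 1) = Real.sqrt ((m : ℝ) + 1)) :
    ∀ (f : ℕ → ℂ) (n : ℕ),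
      (1 / 2 : ℂ) * pop c (pop c f) n + (1 / 2 : ℂ) * qop c (qop c f) n =
        ((γ : ℂ) ^ 2 + (n : ℂ) / 2 + (1 - (-1 : ℂ) ^ n) / 4) * f n := by
  intro f n
  rw [energy_reduce, energy_key γ c hc0 hc1 n]
end

section
/- For every nonzero real number a, every nonnegative integer x, and every real number t, the generating function identity Σ_{n=0}^{∞} C_n(x; a)·t^n/n! = e^{t}·(1 − t/a)^{x} holds, the series converging absolutely. -/
/-!
Both factors on the right are power series in `t`: `(1 - t/a)^x = ∑ₖ (x choose k)·(-t/a)^k` is a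
polynomial because `x` is a natural number, and `e^t = ∑ₗ t^l/l!`. Since
`x(x-1)⋯(x-k+1) = k!·(x choose k)` and `(n choose k)·k!/n! = 1/(n-k)!`, the `n`-th term
`C_n(x; a)·t^n/n!` of the left side is exactly the `n`-th term of their Cauchy product, which
converges absolutely because both factors do.
-/

open Finset Nat

lemma prod_range_natCast_sub_eq_descFactorial {R : Type*} [CommRing R] (x k : ℕ) :
    ∏ j ∈ range k, ((x : R) - j) = x.descFactorial k :=
  (descPochhammer_eval_eq_prod_range k (x : R)).symm.trans
    (descPochhammer_eval_eq_descFactorial R x k)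

lemma hasSum_choose_mul_pow {R : Type*} [CommSemiring R] [TopologicalSpace R] (x : ℕ) (y : R) :
    HasSum (fun k => (x.choose k : R) * y ^ k) ((1 + y) ^ x) := by
  have hsupp : ∀ k ∉ range (x + 1), (x.choose k : R) * y ^ k = 0 := fun k hk => by
    rw [choose_eq_zero_of_lt (by simpa using hk), cast_zero, zero_mul]
  have hexpand : (1 + y) ^ x = ∑ k ∈ range (x + 1), (x.choose k : R) * y ^ k := by
    rw [add_comm, add_pow]
    exact sum_congr rfl fun k _ => by rw [one_pow, mul_one, mul_comm]
  rw [hexpand]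
  exact hasSum_sum_of_ne_finset_zero hsupp

lemma summable_norm_choose_mul_pow {R : Type*} [SeminormedCommRing R] (x : ℕ) (y : R) :
    Summable fun k => ‖(x.choose k : R) * y ^ k‖ :=
  summable_of_ne_finset_zero (s := range (x + 1)) fun k hk => by
    rw [choose_eq_zero_of_lt (by simpa using hk), cast_zero, zero_mul, norm_zero]

lemma summable_norm_pow_div_factorial (t : ℝ) : Summable fun l => ‖t ^ l / (l ! : ℝ)‖ :=
  (Real.summable_pow_div_factorial (abs t)).congr fun l => by
    rw [Real.norm_eq_abs, abs_div, abs_pow, Nat.abs_cast]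

lemma choose_add_mul_descFactorial_mul_pow_div_factorial (x k l : ℕ) (c t : ℝ) :
    ((k + l).choose k : ℝ) * x.descFactorial k * c ^ k * t ^ (k + l) / (k + l)! =
      x.choose k * (c * t) ^ k * (t ^ l / l !) := by
  rw [descFactorial_eq_factorial_mul_choose, choose_symm_add,
    ← add_choose_mul_factorial_mul_factorial k l]
  push_cast
  have hchoose : ((k + l).choose l : ℝ) ≠ 0 := cast_ne_zero.mpr (choose_pos (le_add_left l k)).ne'
  field_simp
  ring

lemma charlier_natCast_mul_pow_div_factorial (a t : ℝ) (x n : ℕ) :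
    charlier a n x * t ^ n / n ! =
      ∑ kl ∈ antidiagonal n, (x.choose kl.1 * (-t / a) ^ kl.1) * (t ^ kl.2 / kl.2 !) := by
  rw [Nat.sum_antidiagonal_eq_sum_range_succ
    (fun k l => (x.choose k * (-t / a) ^ k) * (t ^ l / l !)), charlier, sum_mul, sum_div]
  refine sum_congr rfl fun k hk => ?_
  obtain ⟨l, rfl⟩ := exists_add_of_le (mem_range_succ_iff.mp hk)
  rw [prod_range_natCast_sub_eq_descFactorial, add_tsub_cancel_left,
    show -t / a = -1 / a * t by ring]
  exact choose_add_mul_descFactorial_mul_pow_div_factorial x k l _ t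

theorem charlier_generating_function_general (a : ℝ) (x : ℕ) (t : ℝ) :
    Summable (fun n : ℕ => |charlier a n (x : ℝ) * t ^ n / (n.factorial : ℝ)|) ∧
    ∑' n : ℕ, charlier a n (x : ℝ) * t ^ n / (n.factorial : ℝ) =
      Real.exp t * (1 - t / a) ^ x := by
  have hf := summable_norm_choose_mul_pow x (-t / a)
  have hg := summable_norm_pow_div_factorial t
  have hterm := charlier_natCast_mul_pow_div_factorial a t x
  constructor
  · simpa only [hterm, Real.norm_eq_abs] using
      summable_norm_sum_mul_antidiagonal_of_summable_norm hf hg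
  · rw [tsum_congr hterm, ← tsum_mul_tsum_eq_tsum_sum_antidiagonal_of_summable_norm hf hg,
      (hasSum_choose_mul_pow x (-t / a)).tsum_eq, Real.exp_eq_exp_ℝ,
      (NormedSpace.expSeries_div_hasSum_exp t).tsum_eq, neg_div, ← sub_eq_add_neg, mul_comm]

/-- Generating function for Charlier polynomials: for `a ≠ 0`, a nonnegative integer `x`
and real `t`, `∑_{n=0}^{∞} C_n(x; a)·t^n/n! = e^t·(1 - t/a)^x`, converging absolutely. -/
theorem charlier_generating_function (a : ℝ) (ha : a ≠ 0) (x : ℕ) (t : ℝ) :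
    Summable (fun n : ℕ => |charlier a n (x : ℝ) * t ^ n / (n.factorial : ℝ)|) ∧
    ∑' n : ℕ, charlier a n (x : ℝ) * t ^ n / (n.factorial : ℝ) =
      Real.exp t * (1 - t / a) ^ x :=
  charlier_generating_function_general a x t
end
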